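/- arXiv:2006.14243 — 2 statements merged into one kernel-verified Lean document; each statement's English description precedes it below -/
import Mathlib

section
/- In a finite multidimensional matching market with n firms x¹,...,xⁿ ∈ ℝᴷ and n workers y¹,...,yⁿ ∈ ℝᴸ matched by a permutation σ, if Q is strictly P,N modular and σ maximizes aggregate output ∑ᵢ Q(xⁱ, y^{σ(i)}), then no matched pair of couples ((xⁱ, y^{σ(i)}), (xʲ, y^{σ(j)})) is N,P concordant; that is, the optimal matching satisfies weak P,N sorting. -/
/-- `Q` is `i,j` pairwise supermodular. -/
def PairwiseSupermod {K L : ℕ} (Q : (Fin K → ℝ) → (Fin L → ℝ) → ℝ)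
    (i : Fin K) (j : Fin L) : Prop :=
  ∀ (x : Fin K → ℝ) (y : Fin L → ℝ) (a a' b b' : ℝ), a ≤ a' → b ≤ b' →
    Q (Function.update x i a') (Function.update y j b) +
      Q (Function.update x i a) (Function.update y j b') ≤
    Q (Function.update x i a') (Function.update y j b') +
      Q (Function.update x i a) (Function.update y j b)

/-- `Q` is `i,j` pairwise submodular. -/
def PairwiseSubmod {K L : ℕ} (Q : (Fin K → ℝ) → (Fin L → ℝ) → ℝ)
    (i : Fin K) (j : Fin L) : Prop :=
  ∀ (x : Fin K → ℝ) (y : Fin L → ℝ) (a a' b b' : ℝ), a ≤ a' → b ≤ b' →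
    Q (Function.update x i a') (Function.update y j b') +
      Q (Function.update x i a) (Function.update y j b) ≤
    Q (Function.update x i a') (Function.update y j b) +
      Q (Function.update x i a) (Function.update y j b')

/-- `Q` is strictly `i,j` pairwise supermodular. -/
def StrictPairwiseSupermod {K L : ℕ} (Q : (Fin K → ℝ) → (Fin L → ℝ) → ℝ)
    (i : Fin K) (j : Fin L) : Prop :=
  ∀ (x : Fin K → ℝ) (y : Fin L → ℝ) (a a' b b' : ℝ), a < a' → b < b' →
    Q (Function.update x i a') (Function.update y j b) +
      Q (Function.update x i a) (Function.update y j b') <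
    Q (Function.update x i a') (Function.update y j b') +
      Q (Function.update x i a) (Function.update y j b)

/-- `Q` is strictly `i,j` pairwise submodular. -/
def StrictPairwiseSubmod {K L : ℕ} (Q : (Fin K → ℝ) → (Fin L → ℝ) → ℝ)
    (i : Fin K) (j : Fin L) : Prop :=
  ∀ (x : Fin K → ℝ) (y : Fin L → ℝ) (a a' b b' : ℝ), a < a' → b < b' →
    Q (Function.update x i a') (Function.update y j b') +
      Q (Function.update x i a) (Function.update y j b) <
    Q (Function.update x i a') (Function.update y j b) +
      Q (Function.update x i a) (Function.update y j b')

/-- `Q` is `P,N` modular: pairwise supermodular on `P`, pairwise submodular on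
`N`, and pairwise modular (both) outside `P ∪ N`. -/
def PNModular {K L : ℕ} (P N : Set (Fin K × Fin L))
    (Q : (Fin K → ℝ) → (Fin L → ℝ) → ℝ) : Prop :=
  (∀ p ∈ P, PairwiseSupermod Q p.1 p.2) ∧
  (∀ p ∈ N, PairwiseSubmod Q p.1 p.2) ∧
  (∀ p : Fin K × Fin L, p ∉ P → p ∉ N →
    PairwiseSupermod Q p.1 p.2 ∧ PairwiseSubmod Q p.1 p.2)

/-- `Q` is strictly `P,N` modular. -/
def StrictPNModular {K L : ℕ} (P N : Set (Fin K × Fin L))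
    (Q : (Fin K → ℝ) → (Fin L → ℝ) → ℝ) : Prop :=
  (∀ p ∈ P, StrictPairwiseSupermod Q p.1 p.2) ∧
  (∀ p ∈ N, StrictPairwiseSubmod Q p.1 p.2) ∧
  (∀ p : Fin K × Fin L, p ∉ P → p ∉ N →
    PairwiseSupermod Q p.1 p.2 ∧ PairwiseSubmod Q p.1 p.2)

/-- The pair of couples `(x,y), (x',y')` is `P,N` weak concordant. -/
def PNWeakConcordant {K L : ℕ} (P N : Set (Fin K × Fin L))
    (x : Fin K → ℝ) (y : Fin L → ℝ) (x' : Fin K → ℝ) (y' : Fin L → ℝ) : Prop :=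
  (∀ p ∈ P, 0 ≤ (x p.1 - x' p.1) * (y p.2 - y' p.2)) ∧
  (∀ p ∈ N, (x p.1 - x' p.1) * (y p.2 - y' p.2) ≤ 0)

/-- The pair of couples `(x,y), (x',y')` is `P,N` concordant: weak concordant
with at least one strict (nonzero) product. -/
def PNConcordant {K L : ℕ} (P N : Set (Fin K × Fin L))
    (x : Fin K → ℝ) (y : Fin L → ℝ) (x' : Fin K → ℝ) (y' : Fin L → ℝ) : Prop :=
  PNWeakConcordant P N x y x' y' ∧
  ((∃ p ∈ P, 0 < (x p.1 - x' p.1) * (y p.2 - y' p.2)) ∨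
   (∃ p ∈ N, (x p.1 - x' p.1) * (y p.2 - y' p.2) < 0))

/-- Path from `x'` to `x`, updating coordinates one at a time. -/
def mpath {K : ℕ} (x x' : Fin K → ℝ) (m : ℕ) : Fin K → ℝ :=
  fun k => if (k : ℕ) < m then x k else x' k

lemma mpath_zero {K : ℕ} (x x' : Fin K → ℝ) : mpath x x' 0 = x' := by
  funext k; simp [mpath]
/-! Swapping the partners of `i` and `j` changes aggregate output by minus the mixed difference
`Q xⁱ yⁱ + Q xʲ yʲ - Q xⁱ yʲ - Q xʲ yⁱ`. Moving from `xʲ` to `xⁱ` and from `yʲ` to `yⁱ` one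
coordinate at a time, this mixed difference telescopes into a sum over all `(k, l)` of mixed
differences of `Q` in the single coordinates `k` and `l`. If the two couples are `N,P` concordant,
strict `P,N` modularity makes every such term `≤ 0` and at least one `< 0`, so the swap strictly
raises output. -/

open Finset Function

section MixedDiff

variable {α β : Type*}

def mixedDiff (g : α → β → ℝ) (a a' : α) (b b' : β) : ℝ :=
  g a' b' + g a b - (g a' b + g a b')

lemma mixedDiff_swap_left (g : α → β → ℝ) (a a' : α) (b b' : β) :
    mixedDiff g a' a b b' = -mixedDiff g a a' b b' := by
  simp only [mixedDiff]; ring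

lemma mixedDiff_neg (g : α → β → ℝ) (a a' : α) (b b' : β) :
    mixedDiff (-g) a a' b b' = -mixedDiff g a a' b b' := by
  simp only [mixedDiff, Pi.neg_apply]; ring

lemma sum_range_sum_range_mixedDiff (K L : ℕ) (f : ℕ → ℕ → ℝ) :
    ∑ k ∈ range K, ∑ l ∈ range L, mixedDiff f k (k + 1) l (l + 1) = mixedDiff f 0 K 0 L := by
  have inner (k : ℕ) : ∑ l ∈ range L, mixedDiff f k (k + 1) l (l + 1) =
      (f (k + 1) L - f (k + 1) 0) - (f k L - f k 0) :=
    calc _ = ∑ l ∈ range L, ((f (k + 1) (l + 1) - f k (l + 1)) - (f (k + 1) l - f k l)) :=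
          sum_congr rfl fun l _ => by simp only [mixedDiff]; ring
      _ = _ := by rw [sum_range_sub (fun l => f (k + 1) l - f k l)]; ring
  rw [sum_congr rfl fun k _ => inner k, sum_range_sub (fun k => f k L - f k 0)]
  simp only [mixedDiff]; ring

lemma sum_fin_sum_fin_mixedDiff (K L : ℕ) (f : ℕ → ℕ → ℝ) :
    ∑ k : Fin K, ∑ l : Fin L, mixedDiff f k (k + 1) l (l + 1) = mixedDiff f 0 K 0 L := by
  rw [← sum_range_sum_range_mixedDiff, ← Fin.sum_univ_eq_sum_range]
  exact sum_congr rfl fun k _ =>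
    Fin.sum_univ_eq_sum_range (fun l => mixedDiff f k (k + 1) l (l + 1)) L

end MixedDiff

section SignOfMixedDiff

variable {g : ℝ → ℝ → ℝ} {a a' b b' : ℝ}

lemma mixedDiff_nonneg_of_mul_nonneg
    (hg : ∀ a a' b b', a ≤ a' → b ≤ b' → 0 ≤ mixedDiff g a a' b b')
    (hab : 0 ≤ (a' - a) * (b' - b)) : 0 ≤ mixedDiff g a a' b b' := by
  rcases mul_nonneg_iff.1 hab with ⟨ha, hb⟩ | ⟨ha, hb⟩
  · exact hg a a' b b' (sub_nonneg.1 ha) (sub_nonneg.1 hb)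
  · have := hg a' a b' b (sub_nonpos.1 ha) (sub_nonpos.1 hb)
    simp only [mixedDiff] at this ⊢; linarith

lemma mixedDiff_pos_of_mul_pos
    (hg : ∀ a a' b b', a < a' → b < b' → 0 < mixedDiff g a a' b b')
    (hab : 0 < (a' - a) * (b' - b)) : 0 < mixedDiff g a a' b b' := by
  rcases mul_pos_iff.1 hab with ⟨ha, hb⟩ | ⟨ha, hb⟩
  · exact hg a a' b b' (sub_pos.1 ha) (sub_pos.1 hb)
  · have := hg a' a b' b (sub_neg.1 ha) (sub_neg.1 hb)
    simp only [mixedDiff] at this ⊢; linarith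

end SignOfMixedDiff

section CoordinateSlices

variable {K L : ℕ} {Q : (Fin K → ℝ) → (Fin L → ℝ) → ℝ} {i : Fin K} {j : Fin L}
  {a a' b b' : ℝ}

def coordSlice {ι κ α β : Type*} [DecidableEq ι] [DecidableEq κ] (Q : (ι → α) → (κ → β) → ℝ)
    (i : ι) (j : κ) (u : ι → α) (v : κ → β) : α → β → ℝ :=
  fun a b => Q (update u i a) (update v j b)

lemma PairwiseSupermod.mixedDiff_nonneg (hQ : PairwiseSupermod Q i j) (u : Fin K → ℝ)
    (v : Fin L → ℝ) (hab : 0 ≤ (a' - a) * (b' - b)) :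
    0 ≤ mixedDiff (coordSlice Q i j u v) a a' b b' :=
  mixedDiff_nonneg_of_mul_nonneg (fun a a' b b' ha hb => sub_nonneg.2 (hQ u v a a' b b' ha hb)) hab

lemma PairwiseSupermod.mixedDiff_nonpos (hQ : PairwiseSupermod Q i j) (u : Fin K → ℝ)
    (v : Fin L → ℝ) (hab : (a' - a) * (b' - b) ≤ 0) :
    mixedDiff (coordSlice Q i j u v) a a' b b' ≤ 0 := by
  have := hQ.mixedDiff_nonneg u v (a := a') (a' := a) (b := b) (b' := b') (by linarith)
  rwa [mixedDiff_swap_left, neg_nonneg] at this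

lemma PairwiseSubmod.mixedDiff_nonpos (hQ : PairwiseSubmod Q i j) (u : Fin K → ℝ)
    (v : Fin L → ℝ) (hab : 0 ≤ (a' - a) * (b' - b)) :
    mixedDiff (coordSlice Q i j u v) a a' b b' ≤ 0 := by
  have := mixedDiff_nonneg_of_mul_nonneg (g := -coordSlice Q i j u v)
    (fun a a' b b' ha hb => by
      rw [mixedDiff_neg, neg_nonneg]; exact sub_nonpos.2 (hQ u v a a' b b' ha hb)) hab
  rwa [mixedDiff_neg, neg_nonneg] at this

lemma StrictPairwiseSupermod.mixedDiff_neg (hQ : StrictPairwiseSupermod Q i j) (u : Fin K → ℝ)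
    (v : Fin L → ℝ) (hab : (a' - a) * (b' - b) < 0) :
    mixedDiff (coordSlice Q i j u v) a a' b b' < 0 := by
  have := mixedDiff_pos_of_mul_pos (g := coordSlice Q i j u v) (a := a') (a' := a) (b := b)
    (b' := b') (fun a a' b b' ha hb => sub_pos.2 (hQ u v a a' b b' ha hb)) (by linarith)
  rwa [mixedDiff_swap_left, neg_pos] at this

lemma StrictPairwiseSubmod.mixedDiff_neg (hQ : StrictPairwiseSubmod Q i j) (u : Fin K → ℝ)
    (v : Fin L → ℝ) (hab : 0 < (a' - a) * (b' - b)) :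
    mixedDiff (coordSlice Q i j u v) a a' b b' < 0 := by
  have := mixedDiff_pos_of_mul_pos (g := -coordSlice Q i j u v)
    (fun a a' b b' ha hb => by
      rw [_root_.mixedDiff_neg, neg_pos]; exact sub_neg.2 (hQ u v a a' b b' ha hb)) hab
  rwa [_root_.mixedDiff_neg, neg_pos] at this

lemma StrictPairwiseSupermod.pairwiseSupermod (hQ : StrictPairwiseSupermod Q i j) :
    PairwiseSupermod Q i j := by
  intro u v a a' b b' ha hb
  rcases ha.eq_or_lt with rfl | ha
  · exact (add_comm _ _).le
  rcases hb.eq_or_lt with rfl | hb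
  · linarith
  exact (hQ u v a a' b b' ha hb).le

lemma StrictPairwiseSubmod.pairwiseSubmod (hQ : StrictPairwiseSubmod Q i j) :
    PairwiseSubmod Q i j := by
  intro u v a a' b b' ha hb
  rcases ha.eq_or_lt with rfl | ha
  · exact (add_comm _ _).le
  rcases hb.eq_or_lt with rfl | hb
  · linarith
  exact (hQ u v a a' b b' ha hb).le

lemma StrictPNModular.mixedDiff_nonpos {P N : Set (Fin K × Fin L)} (hQ : StrictPNModular P N Q)
    (p : Fin K × Fin L) (u : Fin K → ℝ) (v : Fin L → ℝ)
    (hP : p ∈ P → (a' - a) * (b' - b) ≤ 0) (hN : p ∈ N → 0 ≤ (a' - a) * (b' - b)) :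
    mixedDiff (coordSlice Q p.1 p.2 u v) a a' b b' ≤ 0 := by
  by_cases hp : p ∈ P
  · exact (hQ.1 p hp).pairwiseSupermod.mixedDiff_nonpos u v (hP hp)
  by_cases hn : p ∈ N
  · exact (hQ.2.1 p hn).pairwiseSubmod.mixedDiff_nonpos u v (hN hn)
  rcases le_total ((a' - a) * (b' - b)) 0 with hab | hab
  · exact (hQ.2.2 p hp hn).1.mixedDiff_nonpos u v hab
  · exact (hQ.2.2 p hp hn).2.mixedDiff_nonpos u v hab

end CoordinateSlices

section CoordPath

variable {K : ℕ} {α : Type*}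

def coordPath (x x' : Fin K → α) (m : ℕ) : Fin K → α :=
  fun k => if (k : ℕ) < m then x k else x' k

@[simp]
lemma coordPath_zero (x x' : Fin K → α) : coordPath x x' 0 = x' := by
  funext k; simp [coordPath]

@[simp]
lemma coordPath_length (x x' : Fin K → α) : coordPath x x' K = x := by
  funext k; simp [coordPath]

lemma coordPath_succ (x x' : Fin K → α) (k : Fin K) :
    coordPath x x' (k + 1) = update (coordPath x x' k) k (x k) := by
  funext l
  rcases eq_or_ne l k with rfl | h
  · simp [coordPath]
  · simp [coordPath, update_of_ne h, h.le_iff_lt]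

lemma update_coordPath_self (x x' : Fin K → α) (k : Fin K) :
    update (coordPath x x' k) k (x' k) = coordPath x x' k := by
  simp [update_eq_self_iff, coordPath]

end CoordPath

lemma StrictPNModular.add_lt_add_of_pnConcordant {K L : ℕ} {P N : Set (Fin K × Fin L)}
    {Q : (Fin K → ℝ) → (Fin L → ℝ) → ℝ} (hQ : StrictPNModular P N Q) {x x' : Fin K → ℝ}
    {y y' : Fin L → ℝ} (hxy : PNConcordant N P x y x' y') :
    Q x y + Q x' y' < Q x y' + Q x' y := by
  obtain ⟨⟨hN, hP⟩, hstrict⟩ := hxy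
  set f : ℕ → ℕ → ℝ := fun m l => Q (coordPath x x' m) (coordPath y y' l)
  have hterm (p : Fin K × Fin L) : mixedDiff f p.1 (p.1 + 1) p.2 (p.2 + 1) =
      mixedDiff (coordSlice Q p.1 p.2 (coordPath x x' p.1) (coordPath y y' p.2))
        (x' p.1) (x p.1) (y' p.2) (y p.2) := by
    simp only [f, mixedDiff, coordSlice, coordPath_succ, update_coordPath_self]
  have hsum : ∑ p : Fin K × Fin L, mixedDiff f p.1 (p.1 + 1) p.2 (p.2 + 1) < 0 := by
    simp only [hterm]
    refine sum_neg' (fun p _ => hQ.mixedDiff_nonpos p _ _ (hP p) (hN p)) ?_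
    rcases hstrict with ⟨p, hp, hpos⟩ | ⟨p, hp, hneg⟩
    · exact ⟨p, mem_univ p, (hQ.2.1 p hp).mixedDiff_neg _ _ hpos⟩
    · exact ⟨p, mem_univ p, (hQ.1 p hp).mixedDiff_neg _ _ hneg⟩
  rw [Fintype.sum_prod_type, sum_fin_sum_fin_mixedDiff] at hsum
  simp only [f, mixedDiff, coordPath_zero, coordPath_length] at hsum
  linarith

lemma sum_comp_mul_swap {ι M : Type*} [Fintype ι] [DecidableEq ι] [AddCommMonoid M]
    (g : ι → ι → M) (σ : Equiv.Perm ι) (i j : ι) :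
    ∑ k, g k ((σ * Equiv.swap i j) k) + (g i (σ i) + g j (σ j)) =
      ∑ k, g k (σ k) + (g i (σ j) + g j (σ i)) := by
  rcases eq_or_ne i j with rfl | hij
  · simp
  have hrest : ∑ k ∈ {i, j}ᶜ, g k ((σ * Equiv.swap i j) k) = ∑ k ∈ {i, j}ᶜ, g k (σ k) :=
    sum_congr rfl fun k hk => by
      simp only [mem_compl, mem_insert, mem_singleton, not_or] at hk
      simp [Equiv.swap_apply_of_ne_of_ne hk.1 hk.2]
  rw [← sum_add_sum_compl {i, j}, ← sum_add_sum_compl {i, j} (fun k => g k (σ k)), hrest,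
    sum_pair hij, sum_pair hij]
  simp only [Equiv.Perm.mul_apply, Equiv.swap_apply_left, Equiv.swap_apply_right]
  abel

theorem stmt8_general (K L n : ℕ) (P N : Set (Fin K × Fin L))
    (Q : (Fin K → ℝ) → (Fin L → ℝ) → ℝ) (hQ : StrictPNModular P N Q)
    (x : Fin n → Fin K → ℝ) (y : Fin n → Fin L → ℝ)
    (σ : Equiv.Perm (Fin n))
    (hopt : ∀ τ : Equiv.Perm (Fin n),
      ∑ i, Q (x i) (y (τ i)) ≤ ∑ i, Q (x i) (y (σ i))) :
    ∀ i j : Fin n, ¬ PNConcordant N P (x i) (y (σ i)) (x j) (y (σ j)) := by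
  intro i j hcon
  have hgain := hQ.add_lt_add_of_pnConcordant hcon
  have hswap := sum_comp_mul_swap (fun k m => Q (x k) (y m)) σ i j
  linarith [hopt (σ * Equiv.swap i j)]

/-- Every maximizer of aggregate output under a strictly `P,N` modular output
function satisfies weak `P,N` sorting: no pair of matched couples is `N,P`
concordant. -/
theorem stmt8 (K L n : ℕ) (P N : Set (Fin K × Fin L)) (hPN : Disjoint P N)
    (Q : (Fin K → ℝ) → (Fin L → ℝ) → ℝ) (hQ : StrictPNModular P N Q)
    (x : Fin n → Fin K → ℝ) (y : Fin n → Fin L → ℝ)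
    (σ : Equiv.Perm (Fin n))
    (hopt : ∀ τ : Equiv.Perm (Fin n),
      ∑ i, Q (x i) (y (τ i)) ≤ ∑ i, Q (x i) (y (σ i))) :
    ∀ i j : Fin n, ¬ PNConcordant N P (x i) (y (σ i)) (x j) (y (σ j)) :=
  stmt8_general K L n P N Q hQ x y σ hopt
end

section
/- In a finite multidimensional matching market, if there exists a permutation matching σ* that satisfies global P,N sorting (for all matched couples (xⁱ,y^{σ*(i)}), (xʲ,y^{σ*(j)}): (xᵢⁱ−xᵢʲ)(yⱼ^{σ*(i)}−yⱼ^{σ*(j)}) ≥ 0 for (i,j) ∈ P and ≤ 0 for (i,j) ∈ N), then for every P,N modular output function Q, σ* maximizes the aggregate output ∑ᵢ Q(xⁱ, y^{σ(i)}) over all permutations σ. -/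
open Finset Function

theorem le_of_forall_update_le {ι β γ : Type*} [Fintype ι] [DecidableEq ι] [Preorder γ]
    (f : (ι → β) → γ) {c c' : ι → β}
    (h : ∀ m i, f (update m i (c' i)) ≤ f (update m i (c i))) : f c' ≤ f c := by
  suffices ∀ s : Finset ι, f c' ≤ f (s.piecewise c c') by simpa using this univ
  intro s
  induction s using Finset.induction_on with
  | empty => simp
  | insert j s hj ih =>
    rw [piecewise_insert]
    refine ih.trans (le_of_eq_of_le ?_ (h _ j))
    rw [← s.piecewise_eq_of_notMem c c' hj, update_eq_self]

theorem mul_nonneg_of_monotone {φ : ℝ → ℝ} (hφ : Monotone φ) {u v B : ℝ}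
    (h : 0 ≤ (u - v) * B) : 0 ≤ (φ u - φ v) * B := by
  rcases lt_trichotomy u v with huv | rfl | huv
  · exact mul_nonneg_of_nonpos_of_nonpos (sub_nonpos.2 (hφ huv.le))
      (nonpos_of_mul_nonneg_right h (sub_neg.2 huv))
  · simp
  · exact mul_nonneg (sub_nonneg.2 (hφ huv.le))
      (nonneg_of_mul_nonneg_right h (sub_pos.2 huv))

theorem mul_nonpos_of_monotone {φ : ℝ → ℝ} (hφ : Monotone φ) {u v B : ℝ}
    (h : (u - v) * B ≤ 0) : (φ u - φ v) * B ≤ 0 := by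
  have := mul_nonneg_of_monotone hφ (B := -B) (by rwa [mul_neg, neg_nonneg])
  rwa [mul_neg, neg_nonneg] at this

theorem monotone_mul_min_mul {δ : ℝ} (hδ : δ * δ = 1) (W : ℝ) :
    Monotone fun v => δ * min (δ * v) W := by
  intro u v huv
  rcases mul_self_eq_one_iff.1 hδ with rfl | rfl
  · simpa using min_le_min_right W huv
  · simpa using min_le_min_right W (neg_le_neg huv)

section FourPoint

variable {K L : ℕ} {Q : (Fin K → ℝ) → (Fin L → ℝ) → ℝ} {k : Fin K} {l : Fin L}
  {α α' β β' : ℝ}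

theorem PairwiseSupermod.four_point (hQ : PairwiseSupermod Q k l) (z : Fin K → ℝ)
    (y : Fin L → ℝ) (h : 0 ≤ (α - α') * (β - β')) :
    Q (update z k α) (update y l β') + Q (update z k α') (update y l β) ≤
      Q (update z k α) (update y l β) + Q (update z k α') (update y l β') := by
  rcases mul_nonneg_iff.1 h with ⟨hα, hβ⟩ | ⟨hα, hβ⟩
  · exact hQ z y α' α β' β (sub_nonneg.1 hα) (sub_nonneg.1 hβ)
  · linarith [hQ z y α α' β β' (sub_nonpos.1 hα) (sub_nonpos.1 hβ)]

theorem PairwiseSubmod.four_point (hQ : PairwiseSubmod Q k l) (z : Fin K → ℝ)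
    (y : Fin L → ℝ) (h : (α - α') * (β - β') ≤ 0) :
    Q (update z k α) (update y l β') + Q (update z k α') (update y l β) ≤
      Q (update z k α) (update y l β) + Q (update z k α') (update y l β') := by
  rcases mul_nonpos_iff.1 h with ⟨hα, hβ⟩ | ⟨hα, hβ⟩
  · exact hQ z y α' α β β' (sub_nonneg.1 hα) (sub_nonpos.1 hβ)
  · linarith [hQ z y α α' β' β (sub_nonpos.1 hα) (sub_nonneg.1 hβ)]

theorem PNModular.four_point_update {P N : Set (Fin K × Fin L)} (hQ : PNModular P N Q)
    (z : Fin K → ℝ) (y : Fin L → ℝ) (hP : (k, l) ∈ P → 0 ≤ (α - α') * (β - β'))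
    (hN : (k, l) ∈ N → (α - α') * (β - β') ≤ 0) :
    Q (update z k α) (update y l β') + Q (update z k α') (update y l β) ≤
      Q (update z k α) (update y l β) + Q (update z k α') (update y l β') := by
  by_cases hp : (k, l) ∈ P
  · exact PairwiseSupermod.four_point (hQ.1 _ hp) z y (hP hp)
  by_cases hn : (k, l) ∈ N
  · exact PairwiseSubmod.four_point (hQ.2.1 _ hn) z y (hN hn)
  obtain ⟨hsup, hsub⟩ := hQ.2.2 _ hp hn
  rcases le_total 0 ((α - α') * (β - β')) with h | h
  · exact PairwiseSupermod.four_point hsup z y h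
  · exact PairwiseSubmod.four_point hsub z y h

end FourPoint

theorem PNModular.four_point {K L : ℕ} {P N : Set (Fin K × Fin L)}
    {Q : (Fin K → ℝ) → (Fin L → ℝ) → ℝ} (hQ : PNModular P N Q) {c c' : Fin K → ℝ}
    {d d' : Fin L → ℝ} (h : PNWeakConcordant P N c d c' d') :
    Q c d' + Q c' d ≤ Q c d + Q c' d' := by
  have key := le_of_forall_update_le (fun X => Q X d - Q X d') (c := c) (c' := c')
    fun m k => by
      have := le_of_forall_update_le
        (fun Y => Q (update m k (c k)) Y - Q (update m k (c' k)) Y) (c := d) (c' := d')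
        fun y l => by
          have := hQ.four_point_update m y (h.1 (k, l)) (h.2 (k, l))
          linarith
      linarith
  linarith

section Transpose

variable {K L : ℕ} {Q : (Fin K → ℝ) → (Fin L → ℝ) → ℝ} {P N : Set (Fin K × Fin L)}

theorem PairwiseSupermod.flip {k : Fin K} {l : Fin L} (hQ : PairwiseSupermod Q k l) :
    PairwiseSupermod (flip Q) l k := fun y x b b' a a' hb ha => by
  have := hQ x y a a' b b' ha hb
  simp only [_root_.flip]
  linarith

theorem PairwiseSubmod.flip {k : Fin K} {l : Fin L} (hQ : PairwiseSubmod Q k l) :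
    PairwiseSubmod (flip Q) l k := fun y x b b' a a' hb ha => by
  have := hQ x y a a' b b' ha hb
  simp only [_root_.flip]
  linarith

theorem PNModular.flip (hQ : PNModular P N Q) :
    PNModular (Prod.swap ⁻¹' P) (Prod.swap ⁻¹' N) (flip Q) :=
  ⟨fun p hp => PairwiseSupermod.flip (hQ.1 p.swap hp),
    fun p hp => PairwiseSubmod.flip (hQ.2.1 p.swap hp),
    fun p hp hn => ⟨PairwiseSupermod.flip (hQ.2.2 p.swap hp hn).1,
      PairwiseSubmod.flip (hQ.2.2 p.swap hp hn).2⟩⟩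

theorem PNWeakConcordant.flip {x x' : Fin K → ℝ} {y y' : Fin L → ℝ}
    (h : PNWeakConcordant P N x y x' y') :
    PNWeakConcordant (Prod.swap ⁻¹' P) (Prod.swap ⁻¹' N) y x y' x' :=
  ⟨fun p hp => by rw [mul_comm]; exact h.1 p.swap hp,
    fun p hp => by rw [mul_comm]; exact h.2 p.swap hp⟩

end Transpose

section TopClass

variable {ι : Type*} [Fintype ι]

noncomputable def topClass (g : ι → ℝ) : Finset ι := {t | ∀ s, g s ≤ g t}

theorem mem_topClass {g : ι → ℝ} {t : ι} : t ∈ topClass g ↔ ∀ s, g s ≤ g t := by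
  simp [topClass]

theorem topClass_ne_univ {g : ι → ℝ} {s t : ι} (h : g s ≠ g t) : topClass g ≠ univ := by
  intro hC
  have hs := mem_topClass.1 (hC ▸ mem_univ s)
  have ht := mem_topClass.1 (hC ▸ mem_univ t)
  exact h ((ht s).antisymm (hs t))

/-- Otherwise the top class of `h` would lie inside the top class of `g` minus a point. -/
theorem topClass_subset_of_card_le {g h : ι → ℝ} (hgh : Monovary h g)
    (hcard : #(topClass g) ≤ #(topClass h)) : topClass g ⊆ topClass h := by
  classical
  intro t ht
  rw [mem_topClass] at ht ⊢
  by_contra! hlt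
  obtain ⟨u, hu⟩ := hlt
  have hsub : topClass h ⊆ (topClass g).erase t := by
    intro s hs
    rw [mem_topClass] at hs
    refine mem_erase.2 ⟨fun hst => (hst ▸ hs u).not_gt hu, mem_topClass.2 ?_⟩
    by_contra! hs'
    obtain ⟨r, hr⟩ := hs'
    linarith [hgh (hr.trans_le (ht r)), hs u]
  have := (card_le_card hsub).trans_lt (card_lt_card (erase_ssubset (mem_topClass.2 ht)))
  omega

theorem sub_min_mul_nonneg {g h : ι → ℝ} (hgh : Monovary h g)
    (hcard : #(topClass g) ≤ #(topClass h)) {W : ℝ} (hW : ∀ s ∉ topClass g, g s ≤ W)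
    (t u : ι) : 0 ≤ (g t - min (g t) W) * (h t - h u) := by
  by_cases ht : t ∈ topClass g
  · have hu := mem_topClass.1 (topClass_subset_of_card_le hgh hcard ht) u
    exact mul_nonneg (sub_nonneg.2 (min_le_left _ _)) (sub_nonneg.2 hu)
  · rw [min_eq_left (hW t ht), sub_self, zero_mul]

theorem exists_signed_topClass_min {κ : Type*} [Fintype κ] [Nonempty κ] (a : ι → κ → ℝ) :
    ∃ k δ, δ * δ = 1 ∧ ∀ k' δ', δ' * δ' = 1 →
      #(topClass fun t => δ * a t k) ≤ #(topClass fun t => δ' * a t k') := by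
  obtain ⟨⟨k, δ⟩, hkδ, hmin⟩ := exists_min_image (univ ×ˢ ({1, -1} : Finset ℝ))
    (fun p => #(topClass fun t => p.2 * a t p.1)) (univ_nonempty.product (by simp))
  refine ⟨k, δ, mul_self_eq_one_iff.2 (by simpa using hkδ), fun k' δ' hδ' => ?_⟩
  exact hmin (k', δ') (by simpa using mul_self_eq_one_iff.1 hδ')

end TopClass

noncomputable def disagreements {ι κ : Type*} [Fintype ι] [Fintype κ] (a : ι → κ → ℝ) :
    Finset (κ × ι × ι) :=
  {p | a p.2.1 p.1 ≠ a p.2.2 p.1}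

theorem disagreements_update_ssubset {ι κ : Type*} [Fintype ι] [Fintype κ] [DecidableEq κ]
    (a : ι → κ → ℝ) (k : κ) (φ : ℝ → ℝ) {s t : ι} (hst : a s k ≠ a t k)
    (hφ : φ (a s k) = φ (a t k)) :
    disagreements (fun t => update (a t) k (φ (a t k))) ⊂ disagreements a := by
  have hsub : disagreements (fun t => update (a t) k (φ (a t k))) ⊆ disagreements a := by
    rintro ⟨k', i, j⟩
    simp only [disagreements, mem_filter, mem_univ, true_and]
    refine mt fun hij => ?_
    by_cases hk : k' = k
    · subst hk; simp [hij]
    · simp [update_of_ne hk, hij]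
  refine (ssubset_iff_of_subset hsub).2 ⟨⟨k, s, t⟩, ?_⟩
  simp [disagreements, hst, hφ]

section Sorted

variable {ι : Type*} {K L : ℕ} {P N : Set (Fin K × Fin L)}

def PNGloballySorted (P N : Set (Fin K × Fin L)) (a : ι → Fin K → ℝ) (b : ι → Fin L → ℝ) :
    Prop :=
  ∀ i j, PNWeakConcordant P N (a i) (b i) (a j) (b j)

variable {a : ι → Fin K → ℝ} {b : ι → Fin L → ℝ}

theorem PNGloballySorted.flip (hab : PNGloballySorted P N a b) :
    PNGloballySorted (Prod.swap ⁻¹' P) (Prod.swap ⁻¹' N) b a :=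
  fun i j => (hab i j).flip

theorem PNGloballySorted.update_monotone (hab : PNGloballySorted P N a b) (k : Fin K)
    {φ : ℝ → ℝ} (hφ : Monotone φ) :
    PNGloballySorted P N (fun t => update (a t) k (φ (a t k))) b := by
  refine fun i j => ⟨fun ⟨k', l⟩ hp => ?_, fun ⟨k', l⟩ hn => ?_⟩ <;> by_cases hk : k' = k
  · subst hk; simpa using mul_nonneg_of_monotone hφ ((hab i j).1 _ hp)
  · simpa [update_of_ne hk] using (hab i j).1 _ hp
  · subst hk; simpa using mul_nonpos_of_monotone hφ ((hab i j).2 _ hn)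
  · simpa [update_of_ne hk] using (hab i j).2 _ hn

end Sorted

section Merge

variable {ι : Type*} [Fintype ι] {K L : ℕ} {P N : Set (Fin K × Fin L)}
  {a : ι → Fin K → ℝ} {b : ι → Fin L → ℝ}

theorem PNGloballySorted.exists_merge (hab : PNGloballySorted P N a b) {k : Fin K} {δ : ℝ}
    (hδ : δ * δ = 1)
    (hC : topClass (fun t => δ * a t k) ≠ univ)
    (hmin : ∀ l ε, ε * ε = 1 →
      #(topClass fun t => δ * a t k) ≤ #(topClass fun t => ε * b t l)) :
    ∃ a' : ι → Fin K → ℝ, PNGloballySorted P N a' b ∧ disagreements a' ⊂ disagreements a ∧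
      ∀ t u, PNWeakConcordant P N (a t) (b t) (a' t) (b u) := by
  classical
  let g : ι → ℝ := fun t => δ * a t k
  obtain ⟨s₀, hs₀⟩ : ∃ s, s ∉ topClass g := by
    by_contra! h
    exact hC (eq_univ_of_forall h)
  obtain ⟨tW, htW, hW⟩ := exists_max_image (topClass g)ᶜ g ⟨s₀, mem_compl.2 hs₀⟩
  obtain ⟨tM, -, hM⟩ := exists_max_image univ g ⟨tW, mem_univ _⟩
  have hWM : g tW < g tM := by
    obtain ⟨r, hr⟩ : ∃ r, g tW < g r := by simpa [mem_topClass] using mem_compl.1 htW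
    exact hr.trans_le (hM r (mem_univ r))
  let φ : ℝ → ℝ := fun v => δ * min (δ * v) (g tW)
  -- sorting makes `ε • b · l` comonotone with `g` for `ε = δ` on `P` and `ε = -δ` on `N`
  have key : ∀ l ε, ε * ε = 1 → (∀ i j, 0 ≤ ε * δ * ((a i k - a j k) * (b i l - b j l))) →
      ∀ t u, 0 ≤ ε * δ * ((a t k - φ (a t k)) * (b t l - b u l)) := by
    intro l ε hε hsgn t u
    have hmono : Monovary (fun t => ε * b t l) g :=
      monovary_iff_forall_mul_nonneg.2 fun i j =>
        (hsgn j i).trans_eq (by simp only [g]; ring)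
    have := sub_min_mul_nonneg hmono (hmin l ε hε) (fun s hs => hW s (mem_compl.2 hs)) t u
    refine this.trans_eq ?_
    simp only [g, φ]
    linear_combination (ε * (b t l - b u l) * min (δ * a t k) (δ * a tW k)) * hδ
  refine ⟨fun t => update (a t) k (φ (a t k)),
    hab.update_monotone k (monotone_mul_min_mul hδ _),
    disagreements_update_ssubset a k φ (s := tM) (t := tW)
      (fun h => hWM.ne (congrArg (δ * ·) h.symm))
      (congrArg (δ * ·) ((min_eq_right hWM.le).trans (min_self (g tW)).symm)),
    fun t u => ⟨fun ⟨k', l⟩ hp => ?_, fun ⟨k', l⟩ hn => ?_⟩⟩ <;> by_cases hk : k' = k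
  · subst hk
    have := key l δ hδ (fun i j => by rw [hδ, one_mul]; exact (hab i j).1 _ hp) t u
    simpa only [update_self, hδ, one_mul] using this
  · simp [update_of_ne hk]
  · subst hk
    have := key l (-δ) (by rw [neg_mul_neg, hδ])
      (fun i j => by rw [neg_mul, hδ, neg_one_mul, neg_nonneg]; exact (hab i j).2 _ hn) t u
    rw [neg_mul, hδ, neg_one_mul, neg_nonneg] at this
    simpa only [update_self] using this
  · simp [update_of_ne hk]

end Merge

section Optimality

variable {ι : Type*} [Fintype ι] {K L : ℕ} {P N : Set (Fin K × Fin L)}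
  {Q : (Fin K → ℝ) → (Fin L → ℝ) → ℝ} {a : ι → Fin K → ℝ} {b : ι → Fin L → ℝ}

theorem sum_apply_perm_eq_of_forall_eq (h : ∀ s t, a s = a t) (τ : Equiv.Perm ι) :
    ∑ t, Q (a t) (b (τ t)) = ∑ t, Q (a t) (b t) := by
  rw [← Equiv.sum_comp τ fun t => Q (a t) (b t)]
  exact sum_congr rfl fun t _ => by rw [h t (τ t)]

theorem PNModular.sum_le_of_merge (hQ : PNModular P N Q) {a' : ι → Fin K → ℝ}
    (ha' : ∀ t u, PNWeakConcordant P N (a t) (b t) (a' t) (b u)) (τ : Equiv.Perm ι)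
    (h' : ∑ t, Q (a' t) (b (τ t)) ≤ ∑ t, Q (a' t) (b t)) :
    ∑ t, Q (a t) (b (τ t)) ≤ ∑ t, Q (a t) (b t) := by
  have := sum_le_sum fun t (_ : t ∈ univ) => hQ.four_point (ha' t (τ t))
  rw [sum_add_distrib, sum_add_distrib] at this
  linarith

theorem PNGloballySorted.sum_le (hQ : PNModular P N Q) (hab : PNGloballySorted P N a b)
    (τ : Equiv.Perm ι) :
    ∑ t, Q (a t) (b (τ t)) ≤ ∑ t, Q (a t) (b t) := by
  induction hn : #(disagreements a) + #(disagreements b) using Nat.strong_induction_on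
    generalizing K L P N Q a b τ with
  | _ n ih =>
  by_cases hconst : ∀ s t, a s = a t
  · exact (sum_apply_perm_eq_of_forall_eq hconst τ).le
  push Not at hconst
  obtain ⟨s, t, hst⟩ := hconst
  obtain ⟨k₀, hk₀⟩ := Function.ne_iff.1 hst
  have : Nonempty (Fin K) := ⟨k₀⟩
  obtain ⟨k, δ, hδ, hxmin⟩ := exists_signed_topClass_min a
  have hCx : #(topClass fun t => δ * a t k) < Fintype.card ι :=
    (hxmin k₀ 1 (one_mul 1)).trans_lt <| (card_lt_iff_ne_univ _).2 <|
      topClass_ne_univ (s := s) (t := t) (by simpa using hk₀)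
  by_cases hy : ∀ l ε, ε * ε = 1 →
      #(topClass fun t => δ * a t k) ≤ #(topClass fun t => ε * b t l)
  · obtain ⟨a', ha'b, hdis, ha'⟩ := hab.exists_merge hδ ((card_lt_iff_ne_univ _).1 hCx) hy
    exact hQ.sum_le_of_merge ha' τ <|
      ih _ (hn ▸ Nat.add_lt_add_right (card_lt_card hdis) _) hQ ha'b τ rfl
  -- some signed `b`-coordinate has a smaller top class: merge in the transposed market
  push Not at hy
  obtain ⟨l₀, ε₀, hε₀, hlt⟩ := hy
  have : Nonempty (Fin L) := ⟨l₀⟩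
  obtain ⟨l, ε, hε, hymin⟩ := exists_signed_topClass_min b
  have hCy := (hymin l₀ ε₀ hε₀).trans_lt hlt
  obtain ⟨b', hb'a, hdis, hb'⟩ := hab.flip.exists_merge hε
    ((card_lt_iff_ne_univ _).1 (hCy.trans hCx)) fun k' δ' hδ' =>
      hCy.le.trans (hxmin k' δ' hδ')
  have := hQ.flip.sum_le_of_merge hb' τ.symm <|
    ih _ (hn ▸ by have := card_lt_card hdis; omega) hQ.flip hb'a τ.symm rfl
  rw [← Equiv.sum_comp τ] at this
  simpa [_root_.flip] using this

end Optimality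

theorem stmt9_general (K L n : ℕ) (P N : Set (Fin K × Fin L))
    (x : Fin n → Fin K → ℝ) (y : Fin n → Fin L → ℝ)
    (σstar : Equiv.Perm (Fin n))
    (hsort : ∀ i j : Fin n,
      PNWeakConcordant P N (x i) (y (σstar i)) (x j) (y (σstar j)))
    (Q : (Fin K → ℝ) → (Fin L → ℝ) → ℝ) (hQ : PNModular P N Q)
    (σ : Equiv.Perm (Fin n)) :
    ∑ i, Q (x i) (y (σ i)) ≤ ∑ i, Q (x i) (y (σstar i)) := by
  simpa using PNGloballySorted.sum_le (b := fun i => y (σstar i)) hQ hsort (σ.trans σstar.symm)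

/-- If some matching `σ*` satisfies global `P,N` sorting (every pair of matched
couples is `P,N` weak concordant), then for every `P,N` modular output function
`σ*` maximizes the aggregate output over all permutation matchings. -/
theorem stmt9 (K L n : ℕ) (P N : Set (Fin K × Fin L)) (hPN : Disjoint P N)
    (x : Fin n → Fin K → ℝ) (y : Fin n → Fin L → ℝ)
    (σstar : Equiv.Perm (Fin n))
    (hsort : ∀ i j : Fin n,
      PNWeakConcordant P N (x i) (y (σstar i)) (x j) (y (σstar j)))
    (Q : (Fin K → ℝ) → (Fin L → ℝ) → ℝ) (hQ : PNModular P N Q)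
    (σ : Equiv.Perm (Fin n)) :
    ∑ i, Q (x i) (y (σ i)) ≤ ∑ i, Q (x i) (y (σstar i)) :=
  stmt9_general K L n P N x y σstar hsort Q hQ σ
end
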